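/- With t_{n,k} as above and first-order label entropy H^ell_1, one has H^ell_1(t_{n,k}) = (1 + n^{falling k}) * log2(1 + n^{falling k}) + n * n^{falling k} * k * log2(k), which is O(n * n^{falling k} * k * log k) for k >= 2. -/

import Mathlib

/-- Last `k` entries of a list. -/
def lastN {α} (k : ℕ) (l : List α) : List α := l.drop (l.length - k)

/-- Generic empirical entropy in per-node form: for each node `e` of `D` we add
`log2 (#{e' | cond e' = cond e} / #{e' | cond e' = cond e ∧ val e' = val e})`.
Grouping nodes by the pair `(cond, val)` recovers the usual form
`∑_z ∑_w m_{z,w} log2 (m_z / m_{z,w})`. -/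
noncomputable def entropySum {α β γ : Type*} [DecidableEq β] [DecidableEq γ]
    (D : List α) (cond : α → β) (val : α → γ) : ℝ :=
  (D.map (fun e => Real.logb 2
    ((D.countP (fun e' => decide (cond e' = cond e)) : ℝ) /
     (D.countP (fun e' => decide (cond e' = cond e ∧ val e' = val e)) : ℝ)))).sum

/-- `k`-label-history given the list of ancestor labels (padded with `box`). -/
def kLabHist {σ} (box : σ) (k : ℕ) (h : List σ) : List σ :=
  lastN k (List.replicate k box ++ h)
-- Unranked ordered labeled trees and forests.
mutual
inductive UTree (σ : Type) where
  | node (a : σ) (children : UForest σ) : UTree σ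
inductive UForest (σ : Type) where
  | nil : UForest σ
  | cons (t : UTree σ) (f : UForest σ) : UForest σ
end

/-- Number of trees in a forest. -/
def UForest.len {σ} : UForest σ → ℕ
  | .nil => 0
  | .cons _ f => 1 + f.len

mutual
/-- List of (label-history, label, degree) triples, one per node. -/
def udata {σ} (hist : List σ) : UTree σ → List (List σ × σ × ℕ)
  | .node a f => (hist, a, f.len) :: fudata (hist ++ [a]) f
/-- Node data of a forest of subtrees rooted at label-history `hist`. -/
def fudata {σ} (hist : List σ) : UForest σ → List (List σ × σ × ℕ)
  | .nil => []
  | .cons t f => udata hist t ++ fudata hist f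
end

/-- Number of nodes of an unranked tree. -/
def sizeU {σ} (t : UTree σ) : ℕ := (udata [] t).length
/-- `k`-th order label entropy `H^ℓ_k` of an unranked tree. -/
noncomputable def HlU {σ} [DecidableEq σ] (box : σ) (k : ℕ) (t : UTree σ) : ℝ :=
  entropySum (udata [] t) (fun e => kLabHist box k e.1) (fun e => e.2.1)

/-- `k`-th order label-degree entropy `H^{ℓ,deg}_k` of an unranked tree. -/
noncomputable def HldU {σ} [DecidableEq σ] (box : σ) (k : ℕ) (t : UTree σ) : ℝ :=
  entropySum (udata [] t) (fun e => (kLabHist box k e.1, e.2.1)) (fun e => e.2.2)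

/-- `k`-th order degree-label entropy `H^{deg,ℓ}_k` of an unranked tree. -/
noncomputable def HdlU {σ} [DecidableEq σ] (box : σ) (k : ℕ) (t : UTree σ) : ℝ :=
  entropySum (udata [] t) (fun e => (kLabHist box k e.1, e.2.2)) (fun e => e.2.1)

/-- Degree entropy `H^deg` of an unranked tree: `∑_i n_i log2(|t|/n_i)`. -/
noncomputable def HdegU {σ} [DecidableEq σ] (t : UTree σ) : ℝ :=
  entropySum (udata [] t) (fun _ => ()) (fun e => e.2.2)

/-- Label alphabet for `t_{n,k}`: a root symbol `a`, symbols `b u` indexed by tuples `u`,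
and symbols `c i` indexed by numbers `i`. -/
inductive Lab where
  | a : Lab
  | b (u : List ℕ) : Lab
  | c (i : ℕ) : Lab
deriving DecidableEq

/-- A single leaf node with label `x`. -/
def leafU {σ} (x : σ) : UTree σ := .node x .nil

/-- Concatenation of forests. -/
def appendF {σ} : UForest σ → UForest σ → UForest σ
  | .nil, g => g
  | .cons t f, g => .cons t (appendF f g)

/-- The forest of leaves `c_{i_1} c_{i_2} ⋯ c_{i_k}` for `u = (i_1, …, i_k)`. -/
def cChildren : List ℕ → UForest Lab
  | [] => .nil
  | i :: is => .cons (leafU (.c i)) (cChildren is)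

/-- The forest `(c_{i_1} ⋯ c_{i_k})^n`. -/
def cycleF (u : List ℕ) : ℕ → UForest Lab
  | 0 => .nil
  | n + 1 => appendF (cChildren u) (cycleF u n)

/-- The tree `t_u = b_u((c_{i_1} ⋯ c_{i_k})^n)`. -/
def tU (n : ℕ) (u : List ℕ) : UTree Lab := .node (.b u) (cycleF u n)

/-- The forest `t_{u_1} t_{u_2} ⋯ t_{u_m}` for a list of tuples. -/
def bForest (n : ℕ) : List (List ℕ) → UForest Lab
  | [] => .nil
  | u :: rest => .cons (tU n u) (bForest n rest)

/-- The tree `t_{n,k} = a(t_{u_1} ⋯ t_{u_m})`, given an enumeration `us` of the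
injective `k`-tuples over `{0, …, n-1}`. -/
def tnk (n : ℕ) (us : List (List ℕ)) : UTree Lab := .node .a (bForest n us)

/-- `us` is an enumeration (without repetitions, in arbitrary order) of all injective
`k`-tuples over `{0, …, n-1}`. -/
def IsEnum (n k : ℕ) (us : List (List ℕ)) : Prop :=
  us.Nodup ∧ ∀ u : List ℕ, u ∈ us ↔ (u.length = k ∧ u.Nodup ∧ ∀ i ∈ u, i < n)

/-!
A node's 1-label-history is its parent's label, so the nodes of `t_{n,k}` fall into
blocks with pairwise distinct histories, and the entropy is the sum of the block
entropies (it does not depend on the order of the nodes). The block with history `a`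
consists of the root and the `m = n^{falling k}` nodes `b_u`, all with distinct labels,
and contributes `(1 + m) log₂ (1 + m)`. Below `b_u` there are `n k` leaves carrying each
of `k` labels exactly `n` times, contributing `n k log₂ k`. Injective `k`-tuples over `[n]`
correspond to embeddings `Fin k ↪ Fin n`, whence the count `m`. For the bound,
`m ≤ n^k < 2^{n k}` gives `log₂ (1 + m) ≤ n k ≤ n k log₂ k` when `k ≥ 2`.
-/

open Real

theorem List.perm_flatMap_cons {α β : Type*} (l : List α) (f : α → β) (g : α → List β) :
    (l.flatMap fun x => f x :: g x).Perm (l.map f ++ l.flatMap g) := by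
  induction l with
  | nil => simp
  | cons x l ih =>
    simp only [List.flatMap_cons, List.map_cons, List.cons_append]
    exact ((ih.append_left (g x)).trans (List.perm_append_comm_assoc _ _ _)).cons (f x)

section EntropySum

variable {α β γ : Type*} [DecidableEq β] [DecidableEq γ] {cond : α → β} {val : α → γ}

theorem entropySum_perm {D D' : List α} (h : D.Perm D') :
    entropySum D cond val = entropySum D' cond val := by
  simp only [entropySum, h.countP_eq]
  exact (h.map _).sum_eq

theorem entropySum_append {D₁ D₂ : List α} (h : ∀ e₁ ∈ D₁, ∀ e₂ ∈ D₂, cond e₁ ≠ cond e₂) :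
    entropySum (D₁ ++ D₂) cond val = entropySum D₁ cond val + entropySum D₂ cond val := by
  have hzero : ∀ {D : List α} {e : α}, (∀ e' ∈ D, cond e' ≠ cond e) →
      D.countP (fun e' => decide (cond e' = cond e)) = 0 ∧
        D.countP (fun e' => decide (cond e' = cond e ∧ val e' = val e)) = 0 := fun h =>
    ⟨List.countP_eq_zero.2 (by simpa using h), List.countP_eq_zero.2 (by simp +contextual [h])⟩
  simp only [entropySum, List.map_append, List.sum_append, List.countP_append]
  congr 1 <;> refine congrArg List.sum (List.map_congr_left fun e he => ?_)
  · obtain ⟨h₂, h₂'⟩ := hzero fun e₂ he₂ => (h e he e₂ he₂).symm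
    rw [h₂, h₂', add_zero, add_zero]
  · obtain ⟨h₁, h₁'⟩ := hzero fun e₁ he₁ => h e₁ he₁ e he
    rw [h₁, h₁', zero_add, zero_add]

theorem entropySum_flatMap {ι : Type*} {l : List ι} {f : ι → List α}
    (h : l.Pairwise fun i j => ∀ e₁ ∈ f i, ∀ e₂ ∈ f j, cond e₁ ≠ cond e₂) :
    entropySum (l.flatMap f) cond val = (l.map fun i => entropySum (f i) cond val).sum := by
  induction l with
  | nil => simp [entropySum]
  | cons i l ih =>
    obtain ⟨hi, hl⟩ := List.pairwise_cons.1 h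
    rw [List.flatMap_cons, entropySum_append, ih hl, List.map_cons, List.sum_cons]
    simp only [List.mem_flatMap]
    rintro e₁ he₁ e₂ ⟨j, hj, he₂⟩
    exact hi j hj e₁ he₁ e₂ he₂

theorem entropySum_eq_of_uniform {D : List α} {c : ℕ}
    (hcond : ∀ e₁ ∈ D, ∀ e₂ ∈ D, cond e₁ = cond e₂)
    (hval : ∀ e ∈ D, (D.map val).count (val e) = c) :
    entropySum D cond val = D.length * logb 2 (D.length / c) := by
  rw [entropySum, ← nsmul_eq_mul, ← List.sum_replicate]
  congr 1
  refine List.eq_replicate_iff.2 ⟨by simp, fun x hx => ?_⟩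
  obtain ⟨e, he, rfl⟩ := List.mem_map.1 hx
  rw [List.countP_eq_length.2 (by simpa using fun e' he' => hcond e' he' e he), ← hval e he,
    List.count_eq_countP, List.countP_map]
  congr 3
  refine List.countP_congr fun e' he' => ?_
  simp [hcond e' he' e he]

end EntropySum

section KLabHist

variable {σ : Type*} (box x y : σ)

@[simp] theorem kLabHist_one_nil : kLabHist box 1 [] = [box] := rfl

@[simp] theorem kLabHist_one_singleton : kLabHist box 1 [x] = [x] := rfl

@[simp] theorem kLabHist_one_pair : kLabHist box 1 [x, y] = [y] := rfl

end KLabHist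

theorem fudata_appendF {σ : Type} (hist : List σ) : ∀ f g : UForest σ,
    fudata hist (appendF f g) = fudata hist f ++ fudata hist g
  | .nil, g => by simp [appendF, fudata]
  | .cons t f, g => by simp [appendF, fudata, fudata_appendF hist f g]

theorem fudata_cChildren (hist : List Lab) (u : List ℕ) :
    fudata hist (cChildren u) = u.map fun i => (hist, Lab.c i, 0) := by
  induction u with
  | nil => rfl
  | cons i u ih => simp [cChildren, fudata, udata, leafU, UForest.len, ih]

theorem fudata_cycleF (hist : List Lab) (u : List ℕ) (n : ℕ) :
    fudata hist (cycleF u n) = (List.replicate n u).flatten.map fun i => (hist, Lab.c i, 0) := by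
  induction n with
  | zero => rfl
  | succ n ih => simp [cycleF, fudata_appendF, fudata_cChildren, ih, List.replicate_succ]

theorem UForest.len_bForest (n : ℕ) (us : List (List ℕ)) : (bForest n us).len = us.length := by
  induction us with
  | nil => rfl
  | cons u us ih => simp [bForest, UForest.len, ih, add_comm]

def tnkLeafData (n : ℕ) (u : List ℕ) : List (List Lab × Lab × ℕ) :=
  (List.replicate n u).flatten.map fun i => ([Lab.a, Lab.b u], Lab.c i, 0)

def tnkUpperData (n : ℕ) (us : List (List ℕ)) : List (List Lab × Lab × ℕ) :=
  ([], Lab.a, us.length) :: us.map fun u => ([Lab.a], Lab.b u, (cycleF u n).len)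

theorem fudata_bForest (n : ℕ) (us : List (List ℕ)) :
    fudata [Lab.a] (bForest n us) =
      us.flatMap fun u => ([Lab.a], Lab.b u, (cycleF u n).len) :: tnkLeafData n u := by
  induction us with
  | nil => rfl
  | cons u us ih => simp [bForest, fudata, tU, udata, fudata_cycleF, tnkLeafData, ih]

theorem udata_tnk_perm (n : ℕ) (us : List (List ℕ)) :
    (udata [] (tnk n us)).Perm (tnkUpperData n us ++ us.flatMap (tnkLeafData n)) := by
  rw [tnk, udata, List.nil_append, fudata_bForest, UForest.len_bForest, tnkUpperData,
    List.cons_append]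
  exact (List.perm_flatMap_cons _ _ _).cons _

theorem tnkUpperData_hist {n : ℕ} {us : List (List ℕ)} :
    ∀ e ∈ tnkUpperData n us, kLabHist Lab.a 1 e.1 = [Lab.a] := by
  simp [tnkUpperData]

theorem tnkLeafData_hist {n : ℕ} {u : List ℕ} :
    ∀ e ∈ tnkLeafData n u, kLabHist Lab.a 1 e.1 = [Lab.b u] := by
  simp only [tnkLeafData, List.forall_mem_map, kLabHist_one_pair, implies_true]

theorem entropySum_tnkUpperData {n : ℕ} {us : List (List ℕ)} (hus : us.Nodup) :
    entropySum (tnkUpperData n us) (fun e => kLabHist Lab.a 1 e.1) (fun e => e.2.1) =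
      (1 + us.length) * logb 2 (1 + us.length) := by
  have hlabels : ((tnkUpperData n us).map fun e => e.2.1).Nodup := by
    simpa [tnkUpperData, Function.comp_def] using hus.map fun _ _ => Lab.b.inj
  rw [entropySum_eq_of_uniform (c := 1)
    (fun e₁ he₁ e₂ he₂ => by rw [tnkUpperData_hist e₁ he₁, tnkUpperData_hist e₂ he₂])
    fun e he => List.count_eq_one_of_mem hlabels (List.mem_map_of_mem he)]
  simp [tnkUpperData, add_comm]

theorem entropySum_tnkLeafData {n : ℕ} {u : List ℕ} (hu : u.Nodup) :
    entropySum (tnkLeafData n u) (fun e => kLabHist Lab.a 1 e.1) (fun e => e.2.1) =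
      n * u.length * logb 2 u.length := by
  rw [entropySum_eq_of_uniform (c := n)
    (fun e₁ he₁ e₂ he₂ => by rw [tnkLeafData_hist e₁ he₁, tnkLeafData_hist e₂ he₂])
    fun e he => ?_]
  · rcases n.eq_zero_or_pos with rfl | hn
    · simp [tnkLeafData]
    · simp [tnkLeafData, List.length_flatten, hn.ne']
  · obtain ⟨i, hi, rfl⟩ := List.mem_map.1 he
    have hiu : i ∈ u := (List.mem_flatten.1 hi).elim fun _ h => List.eq_of_mem_replicate h.1 ▸ h.2
    simp [tnkLeafData, List.count_flatten, Function.comp_def,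
      List.count_map_of_injective _ _ (fun _ _ h => Lab.c.inj h), List.count_eq_one_of_mem hu hiu]

theorem IsEnum.length_eq {n k : ℕ} {us : List (List ℕ)} (h : IsEnum n k us) :
    us.length = n.descFactorial k := by
  obtain ⟨hus, hmem⟩ := h
  have hcard : Fintype.card (Fin k ↪ Fin n) = n.descFactorial k := by
    simp [Fintype.card_embedding_eq]
  rw [← hcard, ← List.toFinset_card_of_nodup hus, ← Finset.card_univ]
  symm
  refine Finset.card_bij (fun e _ => List.ofFn fun j => (e j : ℕ)) (fun e _ => ?_)
    (fun e₁ _ e₂ _ he => ?_) (fun l hl => ?_)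
  · rw [List.mem_toFinset, hmem]
    exact ⟨List.length_ofFn, List.nodup_ofFn.2 (Fin.val_injective.comp e.injective),
      by simp [List.mem_ofFn]⟩
  · ext j
    exact congrFun (List.ofFn_injective he) j
  · obtain ⟨rfl, hnd, hlt⟩ := (hmem l).1 (List.mem_toFinset.1 hl)
    exact ⟨⟨fun j => ⟨l[j], hlt _ (List.getElem_mem _)⟩,
      fun i j hij => Fin.ext (hnd.getElem_inj_iff.1 (congrArg Fin.val hij))⟩,
      Finset.mem_univ _, List.ofFn_getElem⟩

theorem HlU_tnk {n k : ℕ} {us : List (List ℕ)} (h : IsEnum n k us) :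
    HlU Lab.a 1 (tnk n us) =
      (1 + n.descFactorial k) * logb 2 (1 + n.descFactorial k) +
        n * n.descFactorial k * k * logb 2 k := by
  rw [← h.length_eq]
  obtain ⟨hus, hmem⟩ := h
  have hleaves : ∀ u ∈ us, entropySum (tnkLeafData n u)
      (fun e => kLabHist Lab.a 1 e.1) (fun e => e.2.1) = n * k * logb 2 k := fun u hu => by
    obtain ⟨rfl, hu, -⟩ := (hmem u).1 hu
    exact entropySum_tnkLeafData hu
  rw [HlU, entropySum_perm (udata_tnk_perm n us), entropySum_append, entropySum_flatMap,
    entropySum_tnkUpperData hus, List.map_congr_left hleaves]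
  · simp only [List.map_const', List.sum_replicate, nsmul_eq_mul]
    ring
  · refine hus.imp fun hne e₁ he₁ e₂ he₂ => ?_
    rw [tnkLeafData_hist e₁ he₁, tnkLeafData_hist e₂ he₂]
    simpa using hne
  · intro e₁ he₁ e₂ he₂
    obtain ⟨u, -, he₂⟩ := List.mem_flatMap.1 he₂
    simp [tnkUpperData_hist e₁ he₁, tnkLeafData_hist e₂ he₂]

theorem logb_two_one_add_descFactorial_le {n k : ℕ} (hk : 1 ≤ k) :
    logb 2 (1 + n.descFactorial k) ≤ n * k := by
  have hpow : 1 + n.descFactorial k ≤ 2 ^ (n * k) :=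
    calc 1 + n.descFactorial k ≤ 1 + n ^ k := by gcongr; exact Nat.descFactorial_le_pow n k
      _ ≤ (2 ^ n) ^ k := by
        rw [add_comm]
        exact Nat.pow_lt_pow_left Nat.lt_two_pow_self (by omega)
      _ = 2 ^ (n * k) := (pow_mul 2 n k).symm
  rw [logb_le_iff_le_rpow one_lt_two (by positivity), ← Nat.cast_mul, rpow_natCast]
  exact_mod_cast hpow

theorem one_le_logb_two {x : ℝ} (hx : 2 ≤ x) : 1 ≤ logb 2 x := by
  rw [le_logb_iff_rpow_le one_lt_two (by linarith), rpow_one]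
  exact hx

theorem tnk_entropy_formula_le {n k : ℕ} (hk : 2 ≤ k) (hkn : k ≤ n) :
    (1 + n.descFactorial k) * logb 2 (1 + n.descFactorial k) +
        n * n.descFactorial k * k * logb 2 k ≤
      3 * (n * n.descFactorial k * k * logb 2 k) := by
  have hm : (1 : ℝ) ≤ n.descFactorial k := by exact_mod_cast Nat.descFactorial_pos.2 hkn
  have hlogk : 1 ≤ logb 2 k := one_le_logb_two (by exact_mod_cast hk)
  have hroot : (1 + (n.descFactorial k : ℝ)) * logb 2 (1 + n.descFactorial k) ≤
      2 * n.descFactorial k * (n * k) :=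
    mul_le_mul (by linarith) (logb_two_one_add_descFactorial_le (by omega))
      (logb_nonneg one_lt_two (by linarith)) (by positivity)
  have hleaf : n * (n.descFactorial k : ℝ) * k * 1 ≤ n * n.descFactorial k * k * logb 2 k :=
    mul_le_mul_of_nonneg_left hlogk (by positivity)
  linarith

/-- For `n ≥ k ≥ 1` and any enumeration `us` of the injective `k`-tuples over `[n]`,
the first-order label entropy of `t_{n,k}` (with padding symbol `a`) equals
`(1 + n^{falling k}) log2 (1 + n^{falling k}) + n · n^{falling k} · k · log2 k`;
moreover there is an absolute constant `C > 0` such that for all `k ≥ 2` this is at most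
`C · n · n^{falling k} · k · log2 k`. -/
theorem tnk_Hl1 :
    (∀ n k : ℕ, ∀ us : List (List ℕ), 1 ≤ k → k ≤ n → IsEnum n k us →
      HlU Lab.a 1 (tnk n us) =
        (1 + (n.descFactorial k : ℝ)) * Real.logb 2 (1 + (n.descFactorial k : ℝ)) +
          (n : ℝ) * (n.descFactorial k : ℝ) * (k : ℝ) * Real.logb 2 k) ∧
    ∃ C : ℝ, 0 < C ∧ ∀ n k : ℕ, ∀ us : List (List ℕ),
      2 ≤ k → k ≤ n → IsEnum n k us →
      HlU Lab.a 1 (tnk n us) ≤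
        C * ((n : ℝ) * (n.descFactorial k : ℝ) * (k : ℝ) * Real.logb 2 k) := by
  refine ⟨fun n k us _ _ h => HlU_tnk h, 3, by norm_num, fun n k us hk hkn h => ?_⟩
  rw [HlU_tnk h]
  exact tnk_entropy_formula_le hk hkn
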